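/- arXiv:2506.24008 — 4 statements merged into one kernel-verified Lean document; each statement's English description precedes it below -/
import Mathlib

section
/- Let 𝓛 = ∏_{k=1}^D (−L_k, L_k) ∩ ℤ^D and 𝓡 = ∏_{k=1}^D [−R_k, R_k] ∩ ℤ^D, and let g : ℤ^D → ℤ/L'ℤ be as above with L' = ∏_k (L_k + R_k). Then for every r ∈ 𝓛 \ 𝓡, the value g(r) does not lie in the image g(𝓡). -/
private lemma one_le_prod_aux (b : ℕ → ℤ) (n : ℕ) (h : ∀ k < n, 1 ≤ b k) :
    1 ≤ ∏ k ∈ Finset.range n, b k := by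
  induction n with
  | zero => simp
  | succ n ih =>
    rw [Finset.prod_range_succ]
    have h1 := ih (fun k hk => h k (lt_trans hk (Nat.lt_succ_self n)))
    have h2 := h n (Nat.lt_succ_self n)
    nlinarith

private lemma digit_bound (b d : ℕ → ℤ) :
    ∀ n : ℕ, (∀ k < n, 1 ≤ b k) → (∀ k < n, |d k| ≤ b k - 1) →
    |∑ k ∈ Finset.range n, d k * ∏ l ∈ Finset.range k, b l|
      ≤ (∏ k ∈ Finset.range n, b k) - 1 := by
  intro n
  induction n with
  | zero => simp
  | succ n ih =>
    intro hb hd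
    rw [Finset.sum_range_succ, Finset.prod_range_succ]
    have hB : (1:ℤ) ≤ ∏ k ∈ Finset.range n, b k :=
      one_le_prod_aux b n (fun k hk => hb k (lt_trans hk (Nat.lt_succ_self n)))
    have h1 := ih (fun k hk => hb k (lt_trans hk (Nat.lt_succ_self n)))
      (fun k hk => hd k (lt_trans hk (Nat.lt_succ_self n)))
    have h2 : |d n * ∏ l ∈ Finset.range n, b l| ≤ (b n - 1) * ∏ l ∈ Finset.range n, b l := by
      rw [abs_mul, abs_of_nonneg (show (0:ℤ) ≤ ∏ l ∈ Finset.range n, b l by linarith)]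
      exact mul_le_mul_of_nonneg_right (hd n (Nat.lt_succ_self n)) (by linarith)
    calc |(∑ k ∈ Finset.range n, d k * ∏ l ∈ Finset.range k, b l) +
            d n * ∏ l ∈ Finset.range n, b l|
        ≤ |∑ k ∈ Finset.range n, d k * ∏ l ∈ Finset.range k, b l| +
            |d n * ∏ l ∈ Finset.range n, b l| := abs_add_le _ _
      _ ≤ ((∏ k ∈ Finset.range n, b k) - 1) + (b n - 1) * ∏ l ∈ Finset.range n, b l :=
          add_le_add h1 h2
      _ = (∏ k ∈ Finset.range n, b k) * b n - 1 := by ring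

private lemma digits_zero (b d : ℕ → ℤ) :
    ∀ n : ℕ, (∀ k < n, 1 ≤ b k) → (∀ k < n, |d k| ≤ b k - 1) →
    (∑ k ∈ Finset.range n, d k * ∏ l ∈ Finset.range k, b l) = 0 →
    ∀ k < n, d k = 0 := by
  intro n
  induction n with
  | zero => intro _ _ _ k hk; omega
  | succ n ih =>
    intro hb hd hsum
    rw [Finset.sum_range_succ] at hsum
    have hB : (1:ℤ) ≤ ∏ k ∈ Finset.range n, b k :=
      one_le_prod_aux b n (fun k hk => hb k (lt_trans hk (Nat.lt_succ_self n)))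
    have h1 := digit_bound b d n (fun k hk => hb k (lt_trans hk (Nat.lt_succ_self n)))
      (fun k hk => hd k (lt_trans hk (Nat.lt_succ_self n)))
    have hdn : d n = 0 := by
      by_contra h
      have h2 : (1:ℤ) ≤ |d n| := by
        have := abs_pos.mpr h; omega
      have h3 : |d n * ∏ l ∈ Finset.range n, b l| = |d n| * ∏ l ∈ Finset.range n, b l := by
        rw [abs_mul, abs_of_nonneg (show (0:ℤ) ≤ ∏ l ∈ Finset.range n, b l by linarith)]
      have h4 : d n * ∏ l ∈ Finset.range n, b l =
          -(∑ k ∈ Finset.range n, d k * ∏ l ∈ Finset.range k, b l) := by linarith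
      have h5 : |d n| * ∏ l ∈ Finset.range n, b l ≤ (∏ k ∈ Finset.range n, b k) - 1 := by
        rw [← h3, h4, abs_neg]; exact h1
      nlinarith
    have hsum' : (∑ k ∈ Finset.range n, d k * ∏ l ∈ Finset.range k, b l) = 0 := by
      rw [hdn] at hsum; linarith
    intro k hk
    rcases Nat.lt_succ_iff_lt_or_eq.mp hk with h | h
    · exact ih (fun k hk => hb k (lt_trans hk (Nat.lt_succ_self n)))
        (fun k hk => hd k (lt_trans hk (Nat.lt_succ_self n))) hsum' k h
    · rw [h]; exact hdn

/-- for r ∈ 𝓛 \ 𝓡 (i.e. |r_k| < L_k for all k, but |r_k| > R_k for some k),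
g(r) does not lie in the image g(𝓡). -/
theorem stmt_4 (D : ℕ) (L R : ℕ → ℕ)
    (hR : ∀ k < D, 1 ≤ R k) (hRL : ∀ k < D, R k + 1 ≤ L k)
    (g : (Fin D → ℤ) → ZMod (∏ k ∈ Finset.range D, (L k + R k)))
    (hg : ∀ x : Fin D → ℤ,
      g x = ((∑ k : Fin D, x k * ∏ l ∈ Finset.range (k : ℕ), ((L l : ℤ) + (R l : ℤ)) : ℤ) :
        ZMod (∏ k ∈ Finset.range D, (L k + R k)))) :
    ∀ r : Fin D → ℤ, (∀ k : Fin D, |r k| < (L (k : ℕ) : ℤ)) →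
      (∃ k : Fin D, (R (k : ℕ) : ℤ) < |r k|) →
      g r ∉ g '' {x : Fin D → ℤ | ∀ k : Fin D, |x k| ≤ (R (k : ℕ) : ℤ)} := by
  intro r hrL ⟨k₀, hk₀⟩ ⟨x, hx, hgx⟩
  obtain ⟨b, hbdef⟩ : ∃ b : ℕ → ℤ, b = fun k => (L k : ℤ) + (R k : ℤ) := ⟨_, rfl⟩
  obtain ⟨d, hddef⟩ : ∃ d : ℕ → ℤ,
      d = fun k => if h : k < D then r ⟨k, h⟩ - x ⟨k, h⟩ else 0 := ⟨_, rfl⟩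
  have hb : ∀ k < D, 1 ≤ b k := by
    intro k hk
    have h1 : (1:ℤ) ≤ (R k : ℤ) := by exact_mod_cast hR k hk
    have h2 : (0:ℤ) ≤ (L k : ℤ) := Int.ofNat_nonneg _
    rw [hbdef]; dsimp only; linarith
  have hd : ∀ k < D, |d k| ≤ b k - 1 := by
    intro k hk
    have h1 := hrL ⟨k, hk⟩
    have h2 := hx ⟨k, hk⟩
    simp only [Fin.val_mk] at h1 h2
    rw [hddef, hbdef]
    simp only [dif_pos hk]
    have h4 : |r ⟨k, hk⟩| ≤ (L k : ℤ) - 1 := by omega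
    linarith [abs_sub (r ⟨k, hk⟩) (x ⟨k, hk⟩)]
  have hsum : ∀ y : Fin D → ℤ,
      (∑ k : Fin D, y k * ∏ l ∈ Finset.range (k : ℕ), ((L l : ℤ) + (R l : ℤ)))
        = ∑ k ∈ Finset.range D, (if h : k < D then y ⟨k, h⟩ else 0) *
            ∏ l ∈ Finset.range k, b l := by
    intro y
    rw [← Fin.sum_univ_eq_sum_range
      (fun j => (if h : j < D then y ⟨j, h⟩ else 0) * ∏ l ∈ Finset.range j, b l) D]
    apply Finset.sum_congr rfl
    intro k _
    simp [k.isLt, hbdef]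
  have hdiff : (∑ k : Fin D, r k * ∏ l ∈ Finset.range (k : ℕ), ((L l : ℤ) + (R l : ℤ)))
      - (∑ k : Fin D, x k * ∏ l ∈ Finset.range (k : ℕ), ((L l : ℤ) + (R l : ℤ)))
      = ∑ k ∈ Finset.range D, d k * ∏ l ∈ Finset.range k, b l := by
    rw [hsum r, hsum x, ← Finset.sum_sub_distrib]
    apply Finset.sum_congr rfl
    intro k hk
    rw [Finset.mem_range] at hk
    rw [hddef]
    simp [hk, sub_mul]
  have hcast : ((∑ k ∈ Finset.range D, d k * ∏ l ∈ Finset.range k, b l : ℤ) :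
      ZMod (∏ k ∈ Finset.range D, (L k + R k))) = 0 := by
    rw [← hdiff, Int.cast_sub, sub_eq_zero, ← hg r, ← hg x]
    exact hgx.symm
  have hdvd : ((∏ k ∈ Finset.range D, (L k + R k) : ℕ) : ℤ) ∣
      ∑ k ∈ Finset.range D, d k * ∏ l ∈ Finset.range k, b l :=
    (ZMod.intCast_zmod_eq_zero_iff_dvd _ _).mp hcast
  have hNb : ((∏ k ∈ Finset.range D, (L k + R k) : ℕ) : ℤ) = ∏ k ∈ Finset.range D, b k := by
    rw [hbdef]; push_cast; rfl
  have hbpos : (1:ℤ) ≤ ∏ k ∈ Finset.range D, b k := one_le_prod_aux b D hb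
  have hbound := digit_bound b d D hb hd
  have hzero : ∑ k ∈ Finset.range D, d k * ∏ l ∈ Finset.range k, b l = 0 := by
    rcases hdvd with ⟨t, ht⟩
    rw [hNb] at ht
    by_contra h
    have ht1 : t ≠ 0 := by
      intro h0; rw [h0, mul_zero] at ht; exact h ht
    have h2 : (1:ℤ) ≤ |t| := by
      have := abs_pos.mpr ht1; omega
    have h3 : |∑ k ∈ Finset.range D, d k * ∏ l ∈ Finset.range k, b l|
        = (∏ k ∈ Finset.range D, b k) * |t| := by
      rw [ht, abs_mul, abs_of_nonneg (by linarith)]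
    nlinarith
  have hz := digits_zero b d D hb hd hzero
  have hdk : d (k₀ : ℕ) = 0 := hz k₀ k₀.isLt
  have hrx : r k₀ = x k₀ := by
    rw [hddef] at hdk
    simp only [dif_pos k₀.isLt] at hdk
    have h5 : r ⟨(k₀ : ℕ), k₀.isLt⟩ = x ⟨(k₀ : ℕ), k₀.isLt⟩ := by linarith
    simpa using h5
  have h6 := hx k₀
  rw [← hrx] at h6
  linarith
end

section
/- (One-dimensional collapse of a local spatial coupling) Let L, R ∈ ℕ^D with 1 ≤ R_k ≤ L_k − 1 for all k, and let f : ℤ^D → ℝ satisfy f(r) = 0 whenever |r_k| > R_k for some k (locality). Set L' = ∏_{k=1}^D (L_k + R_k). Then there exist a function f' : ℤ → ℝ with period L' and a map h' : ∏_k [0, L_k) ∩ ℤ^D → [0, L') ∩ ℤ such that f'(h'(d_i) − h'(d_j)) = f(d_i − d_j) for all d_i, d_j in the box ∏_k [0, L_k). -/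
private def mrB (D : ℕ) (M : Fin D → ℤ) (k : Fin D) : ℤ :=
  Fin.partialProd M k.castSucc

private lemma mrB_zero {D : ℕ} (M : Fin (D+1) → ℤ) : mrB (D+1) M 0 = 1 := by
  simp [mrB]

private lemma mrB_succ {D : ℕ} (M : Fin (D+1) → ℤ) (k : Fin D) :
    mrB (D+1) M k.succ = M 0 * mrB D (Fin.tail M) k := by
  rw [mrB, mrB, ← Fin.succ_castSucc, Fin.partialProd_succ']

private lemma mr_split {D : ℕ} (M c : Fin (D+1) → ℤ) :
    ∑ k, c k * mrB (D+1) M k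
      = c 0 + M 0 * ∑ k, Fin.tail c k * mrB D (Fin.tail M) k := by
  rw [Fin.sum_univ_succ, mrB_zero, mul_one, Finset.mul_sum]
  congr 1
  refine Finset.sum_congr rfl fun k _ => ?_
  rw [mrB_succ]
  have h : Fin.tail c k = c k.succ := rfl
  rw [h]; ring

private lemma mr_bound : ∀ (D : ℕ) (M c : Fin D → ℤ),
    (∀ k, 0 ≤ c k ∧ c k < M k) →
    0 ≤ ∑ k, c k * mrB D M k ∧ ∑ k, c k * mrB D M k < ∏ k, M k := by
  intro D
  induction D with
  | zero => intro M c _; simp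
  | succ n ih =>
    intro M c hc
    obtain ⟨h01, h02⟩ := hc 0
    obtain ⟨ht1, ht2⟩ := ih (Fin.tail M) (Fin.tail c) (fun k => hc k.succ)
    have hM0 : (0:ℤ) < M 0 := lt_of_le_of_lt h01 h02
    rw [mr_split, Fin.prod_univ_succ]
    constructor
    · positivity
    · have hTP : ∑ k, Fin.tail c k * mrB n (Fin.tail M) k
          ≤ (∏ k : Fin n, Fin.tail M k) - 1 := by omega
      have h2 := mul_le_mul_of_nonneg_left hTP (le_of_lt hM0)
      have hprodeq : (∏ k : Fin n, M k.succ) = ∏ k : Fin n, Fin.tail M k := rfl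
      rw [hprodeq]
      nlinarith

private lemma mr_uniq : ∀ (D : ℕ) (M c : Fin D → ℤ),
    (∀ k, 0 < M k) → (∀ k, |c k| < M k) →
    (∏ k, M k) ∣ ∑ k, c k * mrB D M k → ∀ k, c k = 0 := by
  intro D
  induction D with
  | zero => intro M c _ _ _ k; exact absurd k.2 (by omega)
  | succ n ih =>
    intro M c hM hc hdvd
    rw [mr_split, Fin.prod_univ_succ] at hdvd
    have hM0 : (0:ℤ) < M 0 := hM 0
    have h0 : c 0 = 0 := by
      refine Int.eq_zero_of_abs_lt_dvd ?_ (hc 0)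
      have h1 : M 0 ∣ c 0 + M 0 * ∑ k, Fin.tail c k * mrB n (Fin.tail M) k :=
        dvd_trans (dvd_mul_right (M 0) _) hdvd
      exact (dvd_add_left (dvd_mul_right (M 0) _)).mp h1
    rw [h0, zero_add] at hdvd
    have hprodeq : (∏ k : Fin n, M k.succ) = ∏ k : Fin n, Fin.tail M k := rfl
    rw [hprodeq] at hdvd
    have hT : (∏ k : Fin n, Fin.tail M k) ∣ ∑ k, Fin.tail c k * mrB n (Fin.tail M) k :=
      (mul_dvd_mul_iff_left (ne_of_gt hM0)).mp hdvd
    have htail := ih (Fin.tail M) (Fin.tail c) (fun k => hM k.succ) (fun k => hc k.succ) hT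
    intro k
    refine Fin.cases h0 (fun j => htail j) k

/-- one-dimensional collapse of a local spatial coupling. -/
theorem stmt_5 (D : ℕ) (L R : Fin D → ℕ)
    (hR : ∀ k, 1 ≤ R k) (hRL : ∀ k, R k + 1 ≤ L k)
    (f : (Fin D → ℤ) → ℝ)
    (hloc : ∀ r : Fin D → ℤ, (∃ k, (R k : ℤ) < |r k|) → f r = 0) :
    ∃ (f' : ℤ → ℝ) (h' : (Fin D → ℤ) → ℤ),
      (∀ r : ℤ, f' (r + (∏ k, (L k + R k) : ℕ)) = f' r) ∧
      (∀ d : Fin D → ℤ, (∀ k, 0 ≤ d k ∧ d k < (L k : ℤ)) →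
        0 ≤ h' d ∧ h' d < (∏ k, (L k + R k) : ℕ)) ∧
      (∀ di dj : Fin D → ℤ,
        (∀ k, 0 ≤ di k ∧ di k < (L k : ℤ)) → (∀ k, 0 ≤ dj k ∧ dj k < (L k : ℤ)) →
        f' (h' di - h' dj) = f (di - dj)) := by
  set M : Fin D → ℤ := fun k => (L k : ℤ) + (R k : ℤ) with hMdef
  have hMeq : ∀ k, M k = (L k : ℤ) + (R k : ℤ) := fun k => rfl
  have hMpos : ∀ k, 0 < M k := by
    intro k
    have h1 : (1:ℤ) ≤ (R k : ℤ) := by exact_mod_cast hR k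
    have h2 : (0:ℤ) ≤ (L k : ℤ) := Int.natCast_nonneg _
    rw [hMeq]; omega
  have hcast : ((∏ k, (L k + R k) : ℕ) : ℤ) = ∏ k, M k := by push_cast; rfl
  set Lp : ℤ := ∏ k, M k with hLp
  set S : Finset (Fin D → ℤ) :=
    Fintype.piFinset (fun k => Finset.Icc (-(R k : ℤ)) (R k)) with hS
  refine ⟨fun n => ∑ s ∈ S, if Lp ∣ (n - ∑ k, s k * mrB D M k) then f s else 0,
    fun d => ∑ k, d k * mrB D M k, ?_, ?_, ?_⟩
  · intro r
    rw [hcast]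
    refine Finset.sum_congr rfl fun s _ => ?_
    congr 1
    have heq : r + Lp - ∑ k, s k * mrB D M k = (r - ∑ k, s k * mrB D M k) + Lp := by ring
    rw [heq]
    exact propext (dvd_add_left (dvd_refl Lp))
  · intro d hd
    rw [hcast]
    refine mr_bound D M d fun k => ?_
    obtain ⟨h1, h2⟩ := hd k
    have h3 : (0:ℤ) ≤ (R k : ℤ) := Int.natCast_nonneg _
    have h4 := hMeq k
    constructor <;> omega
  · intro di dj hdi hdj
    have key : ∀ s ∈ S,
        (Lp ∣ ((∑ k, di k * mrB D M k) - (∑ k, dj k * mrB D M k) - ∑ k, s k * mrB D M k))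
        ↔ s = di - dj := by
      intro s hs
      rw [hS, Fintype.mem_piFinset] at hs
      have hsum : (∑ k, di k * mrB D M k) - (∑ k, dj k * mrB D M k) - ∑ k, s k * mrB D M k
          = ∑ k, (di k - dj k - s k) * mrB D M k := by
        rw [← Finset.sum_sub_distrib, ← Finset.sum_sub_distrib]
        exact Finset.sum_congr rfl fun k _ => by ring
      rw [hsum]
      constructor
      · intro hdvd
        have hz := mr_uniq D M (fun k => di k - dj k - s k) hMpos (fun k => by
          show |di k - dj k - s k| < M k
          obtain ⟨hi1, hi2⟩ := hdi k
          obtain ⟨hj1, hj2⟩ := hdj k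
          have h3 := hs k
          rw [Finset.mem_Icc] at h3
          have h4 := hMeq k
          rw [abs_lt]
          omega) hdvd
        funext k
        have hk : di k - dj k - s k = 0 := hz k
        show s k = di k - dj k
        omega
      · intro hse
        have hz : ∑ k, (di k - dj k - s k) * mrB D M k = 0 := by
          refine Finset.sum_eq_zero fun k _ => ?_
          have hk : s k = di k - dj k := by rw [hse]; rfl
          rw [hk]; ring
        rw [hz]
        exact dvd_zero Lp
    have hcong : (∑ s ∈ S, if Lp ∣ ((∑ k, di k * mrB D M k) - (∑ k, dj k * mrB D M k)
          - ∑ k, s k * mrB D M k) then f s else 0)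
        = ∑ s ∈ S, if s = di - dj then f s else 0 :=
      Finset.sum_congr rfl fun s hs => if_congr (key s hs) rfl rfl
    beta_reduce
    rw [hcong, Finset.sum_ite_eq']
    by_cases hmem : di - dj ∈ S
    · rw [if_pos hmem]
    · rw [if_neg hmem]
      symm
      apply hloc
      rw [hS, Fintype.mem_piFinset] at hmem
      push_neg at hmem
      obtain ⟨k, hk⟩ := hmem
      simp only [Finset.mem_Icc, not_and, not_le] at hk
      refine ⟨k, ?_⟩
      have hx : (di - dj) k = di k - dj k := rfl
      rw [hx, lt_abs]
      rcases le_or_gt (-(R k : ℤ)) (di k - dj k) with h | h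
      · exact Or.inl (by rw [hx] at hk; exact hk h)
      · exact Or.inr (by omega)
end

section
/- (Two-dimensional collapse of a local spatial coupling) Let L, R ∈ ℕ^D with 1 ≤ R_k ≤ L_k − 1 for all k, let f : ℤ^D → ℝ have locality R, and partition {1,…,D} into disjoint sets 𝒟₁ ∪ 𝒟₂. Let L̃_γ = ∏_{k ∈ 𝒟_γ} (L_k + R_k) for γ = 1, 2. Then there exist f' : ℤ² → ℝ periodic with period (L̃₁, L̃₂) in each coordinate, and a map h' : ∏_k [0, L_k) ∩ ℤ^D → [0, L̃₁) × [0, L̃₂) ∩ ℤ², such that f'(h'(d_i) − h'(d_j)) = f(d_i − d_j) for all d_i, d_j in the box ∏_k [0, L_k). -/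
/-!
Read the coordinates in `𝒟_γ` as the digits of one integer in the mixed radix `L_k + R_k`
(the map `g_γ` before reduction mod `L̃_γ`). A difference `d_i - d_j` of two box points has
digits `|v_k| ≤ L_k - 1`, and every `x` in the support of `f` has `|x_k| ≤ R_k`, so `x - v` has
digits of absolute value below the radix; such a digit vector is divisible by the modulus
`L̃_γ` only if it vanishes. Hence the encoding of the difference determines, modulo
`(L̃₁, L̃₂)`, at most one point of the support of `f`, and `f'` is obtained by summing `f` over
the residue class of its encoding.
-/

open Finset

section MixedRadix

variable {α : Type*} [LinearOrder α]

def mixedRadix (S : Finset α) (b x : α → ℤ) : ℤ :=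
  ∑ k ∈ S, x k * ∏ l ∈ S with l < k, b l

variable {S : Finset α} {b x : α → ℤ}

theorem mixedRadix_sub (S : Finset α) (b x y : α → ℤ) :
    mixedRadix S b (x - y) = mixedRadix S b x - mixedRadix S b y := by
  simp only [mixedRadix, Pi.sub_apply, sub_mul, sum_sub_distrib]

theorem mixedRadix_nonneg (hb : ∀ k ∈ S, 0 ≤ b k) (hx : ∀ k ∈ S, 0 ≤ x k) :
    0 ≤ mixedRadix S b x :=
  sum_nonneg fun k hk =>
    mul_nonneg (hx k hk) (prod_nonneg fun l hl => hb l (mem_filter.mp hl).1)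

theorem mixedRadix_insert_of_forall_lt {a : α} {s : Finset α} (ha : ∀ k ∈ s, a < k) :
    mixedRadix (insert a s) b x = x a + b a * mixedRadix s b x := by
  have has : a ∉ s := fun h => lt_irrefl a (ha a h)
  have hlow : (insert a s).filter (· < a) = ∅ :=
    filter_eq_empty_iff.mpr fun k hk => not_lt.mpr <| by
      rcases mem_insert.mp hk with rfl | hk
      exacts [le_rfl, (ha k hk).le]
  have hhigh : ∀ k ∈ s, (insert a s).filter (· < k) = insert a (s.filter (· < k)) :=
    fun k hk => by rw [filter_insert, if_pos (ha k hk)]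
  rw [mixedRadix, sum_insert has, hlow, prod_empty, mul_one, mixedRadix, mul_sum]
  congr 1
  refine sum_congr rfl fun k hk => ?_
  rw [hhigh k hk, prod_insert fun h => has (mem_filter.mp h).1]
  ring

theorem abs_mixedRadix_lt (hx : ∀ k ∈ S, |x k| < b k) :
    |mixedRadix S b x| < ∏ k ∈ S, b k := by
  classical
  induction S using Finset.induction_on_min with
  | empty => simp [mixedRadix]
  | insert a s ha ih =>
    have hxa := hx a (mem_insert_self a s)
    have hs := ih fun k hk => hx k (mem_insert_of_mem hk)
    have hba : 0 < b a := (abs_nonneg _).trans_lt hxa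
    rw [mixedRadix_insert_of_forall_lt ha, prod_insert fun h => lt_irrefl a (ha a h)]
    calc |x a + b a * mixedRadix s b x|
        ≤ |x a| + b a * |mixedRadix s b x| :=
          (abs_add_le _ _).trans_eq (by rw [abs_mul, abs_of_pos hba])
      _ < b a * ∏ k ∈ s, b k := by nlinarith

theorem eq_zero_of_mixedRadix_eq_zero (hx : ∀ k ∈ S, |x k| < b k)
    (h : mixedRadix S b x = 0) : ∀ k ∈ S, x k = 0 := by
  classical
  induction S using Finset.induction_on_min with
  | empty => simp
  | insert a s ha ih =>
    have hxa := hx a (mem_insert_self a s)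
    have hba : b a ≠ 0 := ((abs_nonneg _).trans_lt hxa).ne'
    rw [mixedRadix_insert_of_forall_lt ha] at h
    have hxa0 : x a = 0 :=
      Int.eq_zero_of_abs_lt_dvd ⟨-mixedRadix s b x, by linarith⟩ hxa
    have hs0 : mixedRadix s b x = 0 := by
      simpa [hxa0, hba] using h
    intro k hk
    rcases mem_insert.mp hk with rfl | hk
    exacts [hxa0, ih (fun k hk => hx k (mem_insert_of_mem hk)) hs0 k hk]

theorem eq_zero_of_prod_dvd_mixedRadix (hx : ∀ k ∈ S, |x k| < b k)
    (h : (∏ k ∈ S, b k) ∣ mixedRadix S b x) : ∀ k ∈ S, x k = 0 :=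
  eq_zero_of_mixedRadix_eq_zero hx (Int.eq_zero_of_abs_lt_dvd h (abs_mixedRadix_lt hx))

theorem mixedRadix_mem_Ico (hx : ∀ k ∈ S, 0 ≤ x k ∧ x k < b k) :
    mixedRadix S b x ∈ Set.Ico 0 (∏ k ∈ S, b k) :=
  ⟨mixedRadix_nonneg (fun k hk => (hx k hk).1.trans (hx k hk).2.le) fun k hk => (hx k hk).1,
    (le_abs_self _).trans_lt <| abs_mixedRadix_lt fun k hk => by
      rw [abs_of_nonneg (hx k hk).1]; exact (hx k hk).2⟩

theorem eqOn_of_mixedRadix_modEq {y : α → ℤ} (hxy : ∀ k ∈ S, |x k - y k| < b k)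
    (h : mixedRadix S b x ≡ mixedRadix S b y [ZMOD ∏ k ∈ S, b k]) : ∀ k ∈ S, x k = y k := by
  have hdvd := h.symm.dvd
  rw [← mixedRadix_sub] at hdvd
  exact fun k hk => sub_eq_zero.mp (eq_zero_of_prod_dvd_mixedRadix hxy hdvd k hk)

theorem eq_of_mixedRadix_modEq [Fintype α] {S₁ S₂ : Finset α} (hS : S₁ ∪ S₂ = univ) {y : α → ℤ}
    (hxy : ∀ k, |x k - y k| < b k)
    (h₁ : mixedRadix S₁ b x ≡ mixedRadix S₁ b y [ZMOD ∏ k ∈ S₁, b k])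
    (h₂ : mixedRadix S₂ b x ≡ mixedRadix S₂ b y [ZMOD ∏ k ∈ S₂, b k]) : x = y := by
  funext k
  rcases mem_union.mp (hS ▸ mem_univ k : k ∈ S₁ ∪ S₂) with hk | hk
  exacts [eqOn_of_mixedRadix_modEq (fun k _ => hxy k) h₁ k hk,
    eqOn_of_mixedRadix_modEq (fun k _ => hxy k) h₂ k hk]

end MixedRadix

theorem mem_piFinset_Icc_neg_iff {ι : Type*} [Fintype ι] [DecidableEq ι] {r x : ι → ℤ} :
    x ∈ Fintype.piFinset (fun k => Icc (-r k) (r k)) ↔ ∀ k, |x k| ≤ r k := by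
  simp only [Fintype.mem_piFinset, mem_Icc, abs_le]

section Periodization

variable {A Q M : Type*} [DecidableEq Q] [AddCommMonoid M]

def periodization (T : Finset A) (π : A → Q) (f : A → M) (q : Q) : M :=
  ∑ x ∈ T, if π x = q then f x else 0

theorem periodization_apply_of_injective_at {T : Finset A} {π : A → Q} {f : A → M}
    (hf : ∀ x ∉ T, f x = 0) {v : A} (hv : ∀ x ∈ T, π x = π v → x = v) :
    periodization T π f (π v) = f v := by
  rw [periodization, sum_eq_single v (fun x hx hxv => if_neg (mt (hv x hx) hxv))
    (fun hvT => by rw [if_pos rfl, hf v hvT]), if_pos rfl]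

end Periodization

theorem stmt_6_general (D : ℕ) (L R : Fin D → ℕ)
    (f : (Fin D → ℤ) → ℝ)
    (hloc : ∀ r : Fin D → ℤ, (∃ k, (R k : ℤ) < |r k|) → f r = 0)
    (D1 D2 : Finset (Fin D)) (hunion : D1 ∪ D2 = Finset.univ) :
    ∃ (f' : ℤ × ℤ → ℝ) (h' : (Fin D → ℤ) → ℤ × ℤ),
      (∀ (r : ℤ × ℤ) (m n : ℤ),
        f' (r.1 + m * (∏ k ∈ D1, (L k + R k) : ℕ), r.2 + n * (∏ k ∈ D2, (L k + R k) : ℕ)) = f' r) ∧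
      (∀ d : Fin D → ℤ, (∀ k, 0 ≤ d k ∧ d k < (L k : ℤ)) →
        (0 ≤ (h' d).1 ∧ (h' d).1 < (∏ k ∈ D1, (L k + R k) : ℕ)) ∧
        (0 ≤ (h' d).2 ∧ (h' d).2 < (∏ k ∈ D2, (L k + R k) : ℕ))) ∧
      (∀ di dj : Fin D → ℤ,
        (∀ k, 0 ≤ di k ∧ di k < (L k : ℤ)) → (∀ k, 0 ≤ dj k ∧ dj k < (L k : ℤ)) →
        f' (h' di - h' dj) = f (di - dj)) := by
  set b : Fin D → ℤ := fun k => ((L k + R k : ℕ) : ℤ)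
  set N1 := ∏ k ∈ D1, (L k + R k)
  set N2 := ∏ k ∈ D2, (L k + R k)
  have hN1 : (N1 : ℤ) = ∏ k ∈ D1, b k := Nat.cast_prod _ _
  have hN2 : (N2 : ℤ) = ∏ k ∈ D2, b k := Nat.cast_prod _ _
  let collapse (x : Fin D → ℤ) : ℤ × ℤ := (mixedRadix D1 b x, mixedRadix D2 b x)
  let reduce (r : ℤ × ℤ) : ZMod N1 × ZMod N2 := (r.1, r.2)
  let T := Fintype.piFinset fun k => Icc (-(R k : ℤ)) (R k)
  refine ⟨fun r => periodization T (reduce ∘ collapse) f (reduce r), collapse,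
    fun r m n => by simp [reduce], fun d hd => ?_, fun di dj hdi hdj => ?_⟩
  · have hdigits : ∀ k, 0 ≤ d k ∧ d k < b k := fun k => ⟨(hd k).1, by
      have := (hd k).2; simp only [b]; push_cast; omega⟩
    rw [hN1, hN2]
    exact ⟨mixedRadix_mem_Ico fun k _ => hdigits k, mixedRadix_mem_Ico fun k _ => hdigits k⟩
  · have hreduce : reduce (collapse di - collapse dj) = (reduce ∘ collapse) (di - dj) := by
      simp [reduce, collapse, mixedRadix_sub]
    change periodization T (reduce ∘ collapse) f _ = _
    rw [hreduce]
    refine periodization_apply_of_injective_at (fun x hx => hloc x ?_) fun x hx hxv => ?_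
    · simpa only [T, mem_piFinset_Icc_neg_iff, not_forall, not_le] using hx
    · have hdiff : ∀ k, |x k - (di - dj) k| < b k := fun k => by
        have := mem_piFinset_Icc_neg_iff.mp hx k
        have := hdi k; have := hdj k
        simp only [b, Pi.sub_apply, abs_lt, abs_le] at *
        omega
      simp only [Function.comp, reduce, collapse, Prod.mk.injEq, ZMod.intCast_eq_intCast_iff,
        hN1, hN2] at hxv
      exact eq_of_mixedRadix_modEq hunion hdiff hxv.1 hxv.2

/-- two-dimensional collapse of a local spatial coupling, for a
partition {1,…,D} = 𝒟₁ ∪ 𝒟₂. -/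
theorem stmt_6 (D : ℕ) (L R : Fin D → ℕ)
    (hR : ∀ k, 1 ≤ R k) (hRL : ∀ k, R k + 1 ≤ L k)
    (f : (Fin D → ℤ) → ℝ)
    (hloc : ∀ r : Fin D → ℤ, (∃ k, (R k : ℤ) < |r k|) → f r = 0)
    (D1 D2 : Finset (Fin D)) (hdisj : Disjoint D1 D2) (hunion : D1 ∪ D2 = Finset.univ) :
    ∃ (f' : ℤ × ℤ → ℝ) (h' : (Fin D → ℤ) → ℤ × ℤ),
      (∀ (r : ℤ × ℤ) (m n : ℤ),
        f' (r.1 + m * (∏ k ∈ D1, (L k + R k) : ℕ), r.2 + n * (∏ k ∈ D2, (L k + R k) : ℕ)) = f' r) ∧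
      (∀ d : Fin D → ℤ, (∀ k, 0 ≤ d k ∧ d k < (L k : ℤ)) →
        (0 ≤ (h' d).1 ∧ (h' d).1 < (∏ k ∈ D1, (L k + R k) : ℕ)) ∧
        (0 ≤ (h' d).2 ∧ (h' d).2 < (∏ k ∈ D2, (L k + R k) : ℕ))) ∧
      (∀ di dj : Fin D → ℤ,
        (∀ k, 0 ≤ di k ∧ di k < (L k : ℤ)) → (∀ k, 0 ≤ dj k ∧ dj k < (L k : ℤ)) →
        f' (h' di - h' dj) = f (di - dj)) :=
  stmt_6_general D L R f hloc D1 D2 hunion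
end

section
/- (Padding collapse for two-dimensional spQUBOs, Theorem 1) Let L, R ∈ ℕ² with 1 ≤ R_k ≤ L_k − 1, and let f : ℤ² → ℝ be symmetric with locality R (f(r) = 0 whenever |r₁| > R₁ or |r₂| > R₂). Then there exists a function f' : ℤ² → ℝ periodic with period L + R (componentwise) such that f'(d_i − d_j) = f(d_i − d_j) for all d_i, d_j ∈ [0,L₁)×[0,L₂) ∩ ℤ². Consequently any two-dimensional spQUBO with spatial shape L and locality R is equivalent to a two-dimensional periodic spQUBO with spatial shape L + R (same spin positions, same coefficients). -/
/-- Theorem 1, padding collapse for two-dimensional spQUBOs: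
if f : ℤ² → ℝ is symmetric with locality R < L, there is f' periodic with
period L + R componentwise that agrees with f on all differences of points
of the box [0,L₁)×[0,L₂). -/
theorem stmt_18 (L₁ L₂ R₁ R₂ : ℤ)
    (hR₁ : 1 ≤ R₁) (hR₂ : 1 ≤ R₂) (hRL₁ : R₁ ≤ L₁ - 1) (hRL₂ : R₂ ≤ L₂ - 1)
    (f : ℤ × ℤ → ℝ) (hsym : ∀ r, f (-r) = f r)
    (hloc : ∀ r : ℤ × ℤ, (R₁ < |r.1| ∨ R₂ < |r.2|) → f r = 0) :
    ∃ f' : ℤ × ℤ → ℝ,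
      (∀ (r : ℤ × ℤ) (m n : ℤ), f' (r.1 + m * (L₁ + R₁), r.2 + n * (L₂ + R₂)) = f' r) ∧
      (∀ di dj : ℤ × ℤ,
        (0 ≤ di.1 ∧ di.1 < L₁ ∧ 0 ≤ di.2 ∧ di.2 < L₂) →
        (0 ≤ dj.1 ∧ dj.1 < L₁ ∧ 0 ≤ dj.2 ∧ dj.2 < L₂) →
        f' (di - dj) = f (di - dj)) := by
  set K₁ := L₁ + R₁ with hK₁
  set K₂ := L₂ + R₂ with hK₂
  have hK₁pos : 0 < K₁ := by omega
  have hK₂pos : 0 < K₂ := by omega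
  set g₁ : ℤ → ℤ := fun x => (x + R₁) % K₁ - R₁ with hg₁
  set g₂ : ℤ → ℤ := fun x => (x + R₂) % K₂ - R₂ with hg₂
  refine ⟨fun r => f (g₁ r.1, g₂ r.2), ?_, ?_⟩
  · intro r m n
    simp only [hg₁, hg₂]
    congr 2
    · have : r.1 + m * K₁ + R₁ = r.1 + R₁ + m * K₁ := by ring
      rw [this, Int.add_mul_emod_self_right]
    · have : r.2 + n * K₂ + R₂ = r.2 + R₂ + n * K₂ := by ring
      rw [this, Int.add_mul_emod_self_right]
  · intro di dj ⟨h1, h2, h3, h4⟩ ⟨h5, h6, h7, h8⟩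
    set x := di.1 - dj.1 with hx
    set y := di.2 - dj.2 with hy
    have hxb : -L₁ < x ∧ x < L₁ := by omega
    have hyb : -L₂ < y ∧ y < L₂ := by omega
    have hsub : (di - dj : ℤ × ℤ) = (x, y) := rfl
    rw [hsub]
    -- compute g₁ x
    have hg1x : (-R₁ ≤ x ∧ g₁ x = x) ∨ (x < -R₁ ∧ g₁ x = x + K₁) := by
      by_cases hc : -R₁ ≤ x
      · left
        refine ⟨hc, ?_⟩
        simp only [hg₁]
        rw [Int.emod_eq_of_lt (by omega) (by omega)]
        ring
      · right
        refine ⟨by omega, ?_⟩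
        simp only [hg₁]
        have : x + R₁ = (x + R₁ + K₁) + (-1) * K₁ := by ring
        rw [this, Int.add_mul_emod_self_right, Int.emod_eq_of_lt (by omega) (by omega)]
        ring
    have hg2y : (-R₂ ≤ y ∧ g₂ y = y) ∨ (y < -R₂ ∧ g₂ y = y + K₂) := by
      by_cases hc : -R₂ ≤ y
      · left
        refine ⟨hc, ?_⟩
        simp only [hg₂]
        rw [Int.emod_eq_of_lt (by omega) (by omega)]
        ring
      · right
        refine ⟨by omega, ?_⟩
        simp only [hg₂]
        have : y + R₂ = (y + R₂ + K₂) + (-1) * K₂ := by ring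
        rw [this, Int.add_mul_emod_self_right, Int.emod_eq_of_lt (by omega) (by omega)]
        ring
    rcases hg1x with ⟨hc1, he1⟩ | ⟨hc1, he1⟩
    · rcases hg2y with ⟨hc2, he2⟩ | ⟨hc2, he2⟩
      · show f (g₁ x, g₂ y) = f (x, y)
        rw [he1, he2]
      · show f (g₁ x, g₂ y) = f (x, y)
        rw [he1, he2]
        rw [hloc (x, y + K₂) (Or.inr (by simp only; rw [abs_of_pos (by omega : (0:ℤ) < y + K₂)]; omega)),
            hloc (x, y) (Or.inr (by simp only; rw [abs_of_neg (by omega : y < 0)]; omega))]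
    · show f (g₁ x, g₂ y) = f (x, y)
      rw [he1]
      rw [hloc (x + K₁, g₂ y) (Or.inl (by simp only; rw [abs_of_pos (by omega : (0:ℤ) < x + K₁)]; omega)),
          hloc (x, y) (Or.inl (by simp only; rw [abs_of_neg (by omega : x < 0)]; omega))]
end
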